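/- arXiv:1710.00638 — 3 statements merged into one kernel-verified Lean document; each statement's English description precedes it below -/
import Mathlib

section
/- Let R be a commutative ring, let k ≥ 2, let x_1, …, x_k be invertible elements of R with x̄_i := x_i^{−1}, let a = (a_1, a_2, …) be a sequence in R, and let m be any integer. Then h^{sp}_m((x_1,…,x_{k−1}),(x̄_1,…,x̄_{k−1})|a) − h^{sp}_m((x_2,…,x_k),(x̄_2,…,x̄_k)|a) = (x_1 + x̄_1 − x_k − x̄_k) · h^{sp}_{m−1}((x_1,…,x_k),(x̄_1,…,x̄_k)|a). -/
open Finset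

noncomputable def geom {R : Type*} [CommRing R] (x : R) : PowerSeries R :=
  PowerSeries.mk fun k => x ^ k

noncomputable def lin {R : Type*} [CommRing R] (a : R) : PowerSeries R :=
  1 + PowerSeries.C a * PowerSeries.X

noncomputable def facpow {R : Type*} [CommRing R] (x : R) (a : ℕ → R) (m : ℕ) : R :=
  ∏ j ∈ Finset.range m, (x + a (j + 1))

noncomputable def hgl {R : Type*} [CommRing R] {n : ℕ} (x : Fin n → R) (a : ℕ → R) (m : ℤ) : R :=
  if 0 ≤ m then
    PowerSeries.coeff m.toNat
      ((∏ i, geom (x i)) * ∏ j ∈ Finset.range (n + m.toNat - 1), lin (a (j + 1)))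
  else 0

noncomputable def hsp {R : Type*} [CommRing R] {n : ℕ} (x : Fin n → Rˣ) (a : ℕ → R) (m : ℤ) : R :=
  if 0 ≤ m then
    PowerSeries.coeff m.toNat
      ((∏ i, geom ((x i : R)) * geom (((x i)⁻¹ : Rˣ) : R)) *
        ∏ j ∈ Finset.range (n + m.toNat - 1), lin (a (j + 1)))
  else 0

noncomputable def hoo {R : Type*} [CommRing R] {n : ℕ} (x : Fin n → Rˣ) (a : ℕ → R) (m : ℤ) : R :=
  if 0 ≤ m then
    PowerSeries.coeff m.toNat
      ((1 + PowerSeries.X) * (∏ i, geom ((x i : R)) * geom (((x i)⁻¹ : Rˣ) : R)) *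
        ∏ j ∈ Finset.range (n + m.toNat - 1), lin (a (j + 1)))
  else 0

noncomputable def heo {R : Type*} [CommRing R] {n : ℕ} (x : Fin n → Rˣ) (a : ℕ → R) (m : ℤ) : R :=
  if 0 ≤ m then
    if h : n = 1 then
      (PowerSeries.coeff m.toNat
        ((geom ((x ⟨0, by omega⟩ : Rˣ) : R) + geom (((x ⟨0, by omega⟩)⁻¹ : Rˣ) : R)) *
          ∏ j ∈ Finset.range m.toNat, lin (a (j + 1))))
        - (if m = 0 then 1 else 0)
    else
      PowerSeries.coeff m.toNat
        ((1 - PowerSeries.X ^ 2) * (∏ i, geom ((x i : R)) * geom (((x i)⁻¹ : Rˣ) : R)) *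
          ∏ j ∈ Finset.range (n + m.toNat - 1), lin (a (j + 1)))
  else 0

noncomputable def heod {R : Type*} [CommRing R] {n : ℕ} (x : Fin n → Rˣ) (a : ℕ → R) (m : ℤ) : R :=
  if 0 < m then
    if h : 0 < n then
      PowerSeries.coeff m.toNat
        ((geom ((x ⟨0, h⟩ : Rˣ) : R) - geom (((x ⟨0, h⟩)⁻¹ : Rˣ) : R)) *
          (∏ i ∈ Finset.univ.filter (fun i : Fin n => i ≠ ⟨0, h⟩),
            geom ((x i : R)) * geom (((x i)⁻¹ : Rˣ) : R)) *
          ∏ j ∈ Finset.range (n + m.toNat - 1), lin (a (j + 1)))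
    else 0
  else 0

open PowerSeries

/-!
Write `P(u) = 1/((1 - u t)(1 - u⁻¹ t))` for the factor of the generating series of `h^sp`
contributed by a pair `u, u⁻¹`. Since `u u⁻¹ = 1`, the quadratic terms of `1/P(u)` and `1/P(v)`
cancel, so `1/P(v) - 1/P(u) = (u + u⁻¹ - v - v⁻¹) t` and hence
`P(u) - P(v) = (u + u⁻¹ - v - v⁻¹) t P(u) P(v)`. Applied to `u = x₁`, `v = x_k` and multiplied by
the factors of `x₂, …, x_{k-1}`, this gives the recurrence on generating series; both sides then
carry the same factor `∏ (1 + a_j t)`, because the number of variables drops by one exactly when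
the degree rises by one.
-/

section

variable {R : Type*} [CommRing R]

noncomputable def spFactor (u : Rˣ) : PowerSeries R :=
  geom (u : R) * geom ((u⁻¹ : Rˣ) : R)

noncomputable def spSeries {n : ℕ} (x : Fin n → Rˣ) : PowerSeries R :=
  ∏ i, spFactor (x i)

theorem geom_mul_one_sub (x : R) : geom x * (1 - C x * X) = 1 := by
  ext n
  cases n with
  | zero => simp [geom]
  | succ n =>
    rw [mul_sub, mul_one, mul_comm (C x), ← mul_assoc]
    simp [geom, pow_succ, mul_comm]

theorem spFactor_mul (u : Rˣ) :
    spFactor u * (1 - C ((u : R) + ((u⁻¹ : Rˣ) : R)) * X + X ^ 2) = 1 := by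
  have hu : C (u : R) * C ((u⁻¹ : Rˣ) : R) = 1 := by
    rw [← map_mul, Units.mul_inv, map_one]
  calc spFactor u * (1 - C ((u : R) + ((u⁻¹ : Rˣ) : R)) * X + X ^ 2)
      = (geom (u : R) * (1 - C (u : R) * X)) *
          (geom ((u⁻¹ : Rˣ) : R) * (1 - C ((u⁻¹ : Rˣ) : R) * X)) := by
        rw [spFactor, map_add]
        linear_combination (-(geom (u : R) * geom ((u⁻¹ : Rˣ) : R) * X ^ 2)) * hu
    _ = 1 := by rw [geom_mul_one_sub, geom_mul_one_sub, one_mul]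

theorem sub_eq_sub_mul_mul_of_mul_eq_one {p p' q q' : R} (hp : p * p' = 1) (hq : q * q' = 1) :
    p - q = (q' - p') * p * q := by
  linear_combination (-p) * hq + q * hp

theorem spFactor_sub_spFactor (u v : Rˣ) :
    spFactor u - spFactor v =
      C ((u : R) + ((u⁻¹ : Rˣ) : R) - (v : R) - ((v⁻¹ : Rˣ) : R)) * X *
        (spFactor u * spFactor v) := by
  rw [sub_eq_sub_mul_mul_of_mul_eq_one (spFactor_mul u) (spFactor_mul v), map_sub, map_sub,
    map_add, map_add]
  ring

theorem Fin.prod_castSucc_sub_prod_succ {n : ℕ} (f : Fin (n + 2) → R) :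
    ∏ i : Fin (n + 1), f i.castSucc - ∏ i : Fin (n + 1), f i.succ =
      (f 0 - f (Fin.last (n + 1))) * ∏ i : Fin n, f i.succ.castSucc := by
  rw [Fin.prod_univ_succ, Fin.prod_univ_castSucc]
  simp only [Fin.castSucc_zero, Fin.succ_last, Fin.succ_castSucc]
  ring

theorem spSeries_castSucc_sub_spSeries_succ {n : ℕ} (x : Fin (n + 2) → Rˣ) :
    spSeries (fun i : Fin (n + 1) => x i.castSucc) - spSeries (fun i : Fin (n + 1) => x i.succ) =
      C ((x 0 : R) + ((x 0)⁻¹ : Rˣ) - (x (Fin.last (n + 1)) : R)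
          - ((x (Fin.last (n + 1)))⁻¹ : Rˣ)) * X * spSeries x := by
  have hsplit : spSeries x =
      spFactor (x 0) * spFactor (x (Fin.last (n + 1))) *
        ∏ i : Fin n, spFactor (x i.succ.castSucc) := by
    rw [spSeries, Fin.prod_univ_succ, Fin.prod_univ_castSucc, Fin.succ_last]
    simp only [Fin.succ_castSucc]
    ring
  rw [spSeries, spSeries, Fin.prod_castSucc_sub_prod_succ (fun i => spFactor (x i)),
    spFactor_sub_spFactor, hsplit]
  ring

theorem hsp_of_neg {n : ℕ} (x : Fin n → Rˣ) (a : ℕ → R) {m : ℤ} (hm : m < 0) :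
    hsp x a m = 0 :=
  if_neg hm.not_ge

theorem hsp_natCast {n : ℕ} (x : Fin n → Rˣ) (a : ℕ → R) (m : ℕ) :
    hsp x a m = coeff m (spSeries x * ∏ j ∈ range (n + m - 1), lin (a (j + 1))) := by
  simp [hsp, spSeries, spFactor]

theorem hsp_castSucc_sub_hsp_succ {n : ℕ} (x : Fin (n + 2) → Rˣ) (a : ℕ → R) (m : ℤ) :
    hsp (fun i : Fin (n + 1) => x i.castSucc) a m - hsp (fun i : Fin (n + 1) => x i.succ) a m =
      ((x 0 : R) + ((x 0)⁻¹ : Rˣ) - (x (Fin.last (n + 1)) : R)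
          - ((x (Fin.last (n + 1)))⁻¹ : Rˣ)) * hsp x a (m - 1) := by
  rcases lt_or_ge m 0 with hm | hm
  · rw [hsp_of_neg _ _ hm, hsp_of_neg _ _ hm, hsp_of_neg _ _ (by omega), sub_zero, mul_zero]
  obtain ⟨M, rfl⟩ := Int.eq_ofNat_of_zero_le hm
  rw [hsp_natCast, hsp_natCast, ← map_sub, ← sub_mul, spSeries_castSucc_sub_spSeries_succ,
    mul_assoc, mul_assoc, coeff_C_mul]
  cases M with
  | zero => rw [coeff_zero_X_mul, mul_zero, hsp_of_neg _ _ (by omega), mul_zero]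
  | succ N =>
    rw [coeff_succ_X_mul, show ((N + 1 : ℕ) : ℤ) - 1 = (N : ℕ) by omega, hsp_natCast,
      show n + 1 + (N + 1) - 1 = n + 2 + N - 1 by omega]

end

/-- recurrence relation for `h^sp`. -/
theorem hsp_recurrence {R : Type*} [CommRing R] (k : ℕ) (hk : 2 ≤ k)
    (x : Fin k → Rˣ) (a : ℕ → R) (m : ℤ) :
    hsp (fun i : Fin (k - 1) => x ⟨(i : ℕ), by have := i.isLt; omega⟩) a m
      - hsp (fun i : Fin (k - 1) => x ⟨(i : ℕ) + 1, by have := i.isLt; omega⟩) a m =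
    ((x ⟨0, by omega⟩ : R) + (((x ⟨0, by omega⟩)⁻¹ : Rˣ) : R)
        - (x ⟨k - 1, by omega⟩ : R) - (((x ⟨k - 1, by omega⟩)⁻¹ : Rˣ) : R)) *
      hsp x a (m - 1) := by
  obtain ⟨n, rfl⟩ : ∃ n, k = n + 2 := ⟨k - 2, by omega⟩
  exact hsp_castSucc_sub_hsp_succ x a m
end

section
/- (Flagged Jacobi–Trudi identity, odd orthogonal case.) Let n ≥ 1, let R be a commutative ring, let x_1, …, x_n be invertible elements of R with x̄_i := x_i^{−1}, let a = (a_1, a_2, …) be a sequence in R, and let λ = (λ_1 ≥ … ≥ λ_n ≥ 0) be a partition with at most n parts. Then det_{1≤i,j≤n} ( x_i·(x_i|a)^{λ_j+n−j} − (x̄_i|a)^{λ_j+n−j} ) = ∏_{i=1}^n (x_i − 1) · ∏_{1≤i<j≤n}(x_i + x̄_i − x_j − x̄_j) · det_{1≤i,j≤n} ( h^{oo}_{λ_j−j+i}(x^{(i)}, x̄^{(i)}|a) ), where x^{(i)} := (x_i, …, x_n) and x̄^{(i)} := (x̄_i, …, x̄_n). (This is the paper's identity with numerator and denominator rows each multiplied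 by x_i^{1/2}, so that no half-integer powers occur.) -/
open Finset

/-!
Write `q_u = 1 / ((1 - u t) (1 - u⁻¹ t))` (`symGeom u`) and `y_u = u + u⁻¹`. Since
`u / (1 - u t) - 1 / (1 - u⁻¹ t) = (u - 1) (1 + t) q_u`, the entry `x_i (x_i|a)^μ - (x̄_i|a)^μ`
is `(x_i - 1)` times the coefficient of `t^μ` in `(1 + t) q_{x_i} ∏_{j ≤ μ} (1 + a_j t)`.
Iterating `q_u - q_v = (y_u - y_v) t q_u q_v` along `x_n, …, x_1` expands
`q_{x_i} = ∑_k ∏_{l > k} (y_{x_i} - y_{x_l}) t^{n-1-k} q_{x_k} ⋯ q_{x_n}`; the remainder term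
carries the factor `y_{x_i} - y_{x_i} = 0`. Hence the matrix factors as
`diag (x_i - 1) · B · H`, where `H` is the matrix of the `h^{oo}` and `B` is upper triangular
with diagonal entries `∏_{l > i} (y_{x_i} - y_{x_l})`.
-/

open PowerSeries

theorem eq_sum_prod_Ico_add_prod_range {S : Type*} [CommRing S] (p : S) (q d : ℕ → S) (n : ℕ)
    (h : ∀ l < n, p - q l = d l * p * q l) :
    p = ∑ k ∈ range n, (∏ l ∈ Ico (k + 1) n, d l) * ∏ l ∈ Ico k n, q l
      + (∏ l ∈ range n, d l) * p * ∏ l ∈ range n, q l := by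
  induction n with
  | zero => simp
  | succ n ih =>
    have hstep : ∀ k ∈ range n, (∏ l ∈ Ico (k + 1) (n + 1), d l) * ∏ l ∈ Ico k (n + 1), q l
        = d n * q n * ((∏ l ∈ Ico (k + 1) n, d l) * ∏ l ∈ Ico k n, q l) := by
      intro k hk
      have hk : k < n := mem_range.mp hk
      rw [prod_Ico_succ_top (by omega), prod_Ico_succ_top (by omega)]
      ring
    rw [sum_range_succ, sum_congr rfl hstep, ← mul_sum, prod_range_succ, prod_range_succ,
      Ico_self, prod_empty, Nat.Ico_succ_singleton, prod_singleton]
    linear_combination h n (by omega) + d n * q n * ih fun l hl => h l (by omega)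

section
variable {R : Type*} [CommRing R]

theorem one_sub_C_mul_X_mul_geom (x : R) : (1 - C x * X) * geom x = 1 := by
  ext (_ | k)
  · simp [geom, coeff_zero_eq_constantCoeff]
  · rw [sub_mul, one_mul, map_sub, mul_assoc, coeff_C_mul, coeff_succ_X_mul]
    simp [geom, coeff_one, pow_succ, mul_comm]

theorem coeff_succ_geom_mul (x : R) (Q : PowerSeries R) (m : ℕ) :
    coeff (m + 1) (geom x * Q) = x * coeff m (geom x * Q) + coeff (m + 1) Q := by
  have h : geom x * Q = Q + C x * X * (geom x * Q) := by
    linear_combination Q * one_sub_C_mul_X_mul_geom x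
  nth_rewrite 1 [h]
  rw [map_add, mul_assoc, coeff_C_mul, coeff_succ_X_mul, add_comm]

noncomputable def linProd (a : ℕ → R) (m : ℕ) : PowerSeries R :=
  ∏ j ∈ range m, lin (a (j + 1))

theorem linProd_succ (a : ℕ → R) (m : ℕ) :
    linProd a (m + 1) = linProd a m + C (a (m + 1)) * X * linProd a m := by
  rw [linProd, prod_range_succ, ← linProd, lin]
  ring

theorem coeff_linProd_of_lt (a : ℕ → R) {m k : ℕ} (h : m < k) : coeff k (linProd a m) = 0 := by
  induction m generalizing k with
  | zero => simp [linProd, coeff_one, h.ne']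
  | succ m ih =>
    obtain ⟨k, rfl⟩ := Nat.exists_eq_add_of_lt (Nat.zero_lt_of_lt h)
    rw [linProd_succ, map_add, mul_assoc, coeff_C_mul, zero_add, coeff_succ_X_mul,
      ih (by omega), ih (by omega), mul_zero, add_zero]

theorem coeff_geom_mul_linProd (x : R) (a : ℕ → R) (m : ℕ) :
    coeff m (geom x * linProd a m) = facpow x a m := by
  induction m with
  | zero => simp [linProd, facpow, geom]
  | succ m ih =>
    have hshift : geom x * (C (a (m + 1)) * X * linProd a m) =
        C (a (m + 1)) * (X * (geom x * linProd a m)) := by ring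
    rw [linProd_succ, mul_add, map_add, coeff_succ_geom_mul, hshift, coeff_C_mul,
      coeff_succ_X_mul, coeff_linProd_of_lt a (Nat.lt_succ_self m), ih, facpow, facpow,
      prod_range_succ]
    ring

noncomputable def symGeom (u : Rˣ) : PowerSeries R := geom (u : R) * geom (↑u⁻¹ : R)

theorem C_mul_geom_sub_geom_inv (u : Rˣ) :
    C (u : R) * geom (u : R) - geom (↑u⁻¹ : R) = C ((u : R) - 1) * (1 + X) * symGeom u := by
  have h1 := one_sub_C_mul_X_mul_geom (u : R)
  have h2 := one_sub_C_mul_X_mul_geom (↑u⁻¹ : R)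
  have hu : C (u : R) * C (↑u⁻¹ : R) = 1 := by rw [← map_mul, Units.mul_inv, map_one]
  rw [symGeom, map_sub, map_one]
  linear_combination geom (↑u⁻¹ : R) * h1 - C (u : R) * geom (u : R) * h2
    - geom (u : R) * geom (↑u⁻¹ : R) * X * hu

theorem symGeom_sub_symGeom (u v : Rˣ) :
    symGeom u - symGeom v =
      C ((u : R) + ↑u⁻¹ - v - ↑v⁻¹) * X * symGeom u * symGeom v := by
  have h1 := one_sub_C_mul_X_mul_geom (u : R)
  have h2 := one_sub_C_mul_X_mul_geom (↑u⁻¹ : R)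
  have h3 := one_sub_C_mul_X_mul_geom (v : R)
  have h4 := one_sub_C_mul_X_mul_geom (↑v⁻¹ : R)
  have hu : C (u : R) * C (↑u⁻¹ : R) = 1 := by rw [← map_mul, Units.mul_inv, map_one]
  have hv : C (v : R) * C (↑v⁻¹ : R) = 1 := by rw [← map_mul, Units.mul_inv, map_one]
  set A := geom (u : R)
  set B := geom (↑u⁻¹ : R)
  set G := geom (v : R)
  set D := geom (↑v⁻¹ : R)
  rw [symGeom, symGeom, map_sub, map_sub, map_add]
  linear_combination A * B * G * D * X ^ 2 * (hv - hu)
    - A * B * ((1 - C (↑v⁻¹ : R) * X) * D * h3 + h4)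
    + G * D * ((1 - C (↑u⁻¹ : R) * X) * B * h1 + h2)

theorem symGeom_eq_sum (x : ℕ → Rˣ) {n i : ℕ} (hi : i < n) :
    symGeom (x i) = ∑ k ∈ range n,
      C (∏ l ∈ Ico (k + 1) n, ((x i : R) + ↑(x i)⁻¹ - x l - ↑(x l)⁻¹)) * X ^ (n - 1 - k) *
        ∏ l ∈ Ico k n, symGeom (x l) := by
  have hexp := eq_sum_prod_Ico_add_prod_range (symGeom (x i)) (fun l => symGeom (x l))
    (fun l => C ((x i : R) + ↑(x i)⁻¹ - x l - ↑(x l)⁻¹) * X) n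
    (fun l _ => symGeom_sub_symGeom _ _)
  have hvanish : ∏ l ∈ range n, C ((x i : R) + ↑(x i)⁻¹ - x l - ↑(x l)⁻¹) * X = 0 :=
    prod_eq_zero (mem_range.mpr hi) (by simp)
  rw [hvanish, zero_mul, zero_mul, add_zero] at hexp
  refine hexp.trans (sum_congr rfl fun k hk => ?_)
  rw [prod_mul_distrib, prod_const, Nat.card_Ico, map_prod, Nat.sub_sub, add_comm 1 k]

theorem coeff_X_pow_mul_eq_hoo (x : ℕ → Rˣ) (a : ℕ → R) {n k : ℕ} (hk : k < n) (μ : ℕ) :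
    coeff μ (X ^ (n - 1 - k) * ((1 + X) * (∏ l ∈ Ico k n, symGeom (x l)) * linProd a μ)) =
      hoo (fun t : Fin (n - k) => x (k + t)) a ((μ : ℤ) - (n - 1 - k : ℕ)) := by
  have hprod : ∏ l ∈ Ico k n, symGeom (x l) =
      ∏ t : Fin (n - k), geom (x (k + t) : R) * geom (↑(x (k + t))⁻¹ : R) := by
    rw [prod_Ico_eq_prod_range, ← Fin.prod_univ_eq_prod_range (fun t => symGeom (x (k + t)))]
    rfl
  rw [coeff_X_pow_mul', hoo]
  split_ifs
  · rw [hprod, linProd, show (μ - (n - 1 - k : ℕ) : ℤ).toNat = μ - (n - 1 - k) by omega,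
      show n - k + (μ - (n - 1 - k)) - 1 = μ by omega]
  · omega
  · omega
  · rfl

theorem entry_eq_sum_hoo (x : ℕ → Rˣ) (a : ℕ → R) {n i : ℕ} (hi : i < n) (μ : ℕ) :
    (x i : R) * facpow (x i : R) a μ - facpow (↑(x i)⁻¹ : R) a μ =
      ((x i : R) - 1) * ∑ k ∈ range n,
        (∏ l ∈ Ico (k + 1) n, ((x i : R) + ↑(x i)⁻¹ - x l - ↑(x l)⁻¹)) *
          hoo (fun t : Fin (n - k) => x (k + t)) a ((μ : ℤ) - (n - 1 - k : ℕ)) := by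
  calc (x i : R) * facpow (x i : R) a μ - facpow (↑(x i)⁻¹ : R) a μ
      = coeff μ ((C (x i : R) * geom (x i : R) - geom (↑(x i)⁻¹ : R)) * linProd a μ) := by
        rw [sub_mul, map_sub, mul_assoc, coeff_C_mul, coeff_geom_mul_linProd,
          coeff_geom_mul_linProd]
    _ = ((x i : R) - 1) * coeff μ ((1 + X) * symGeom (x i) * linProd a μ) := by
        rw [C_mul_geom_sub_geom_inv, mul_assoc, mul_assoc, coeff_C_mul, mul_assoc]
    _ = _ := by
        rw [symGeom_eq_sum x hi, mul_sum, sum_mul, map_sum]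
        congr 1
        refine sum_congr rfl fun k hk => ?_
        rw [← coeff_X_pow_mul_eq_hoo x a (mem_range.mp hk), ← coeff_C_mul]
        ring_nf

theorem det_prod_Ico_eq_prod_Ioi {n : ℕ} (f : ℕ → ℕ → R) (hf : ∀ i < n, f i i = 0) :
    (Matrix.of fun i k : Fin n => ∏ l ∈ Ico ((k : ℕ) + 1) n, f i l).det =
      ∏ i : Fin n, ∏ j ∈ Ioi i, f i j := by
  rw [Matrix.det_of_isUpperTriangular]
  · refine prod_congr rfl fun i _ => ?_
    rw [Matrix.of_apply, Ico_add_one_left_eq_Ioo, ← Fin.map_valEmbedding_Ioi, prod_map]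
    rfl
  · intro i k hki
    exact prod_eq_zero (mem_Ico.mpr ⟨hki, i.isLt⟩) (hf i i.isLt)

end

/-- flagged Jacobi-Trudi identity, odd orthogonal case. -/
theorem flagged_jacobi_trudi_oo {R : Type*} [CommRing R] (n : ℕ)
    (x : Fin n → Rˣ) (a : ℕ → R) (lam : Fin n → ℕ) :
    Matrix.det (Matrix.of fun i j : Fin n =>
        (x i : R) * facpow ((x i : R)) a (lam j + (n - 1 - (j : ℕ)))
          - facpow ((((x i)⁻¹ : Rˣ) : R)) a (lam j + (n - 1 - (j : ℕ)))) =
      (∏ i : Fin n, ((x i : R) - 1)) *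
      (∏ i : Fin n, ∏ j ∈ Finset.Ioi i,
          ((x i : R) + (((x i)⁻¹ : Rˣ) : R) - (x j : R) - (((x j)⁻¹ : Rˣ) : R))) *
        Matrix.det (Matrix.of fun i j : Fin n =>
          hoo (fun k : Fin (n - (i : ℕ)) =>
              x ⟨(i : ℕ) + (k : ℕ), by have := i.isLt; have := k.isLt; omega⟩) a
            ((lam j : ℤ) - (j : ℕ) + (i : ℕ))) := by
  set x' : ℕ → Rˣ := fun l => if h : l < n then x ⟨l, h⟩ else 1
  have hx' : ∀ (l : ℕ) (h : l < n), x' l = x ⟨l, h⟩ := fun l h => dif_pos h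
  set f : ℕ → ℕ → R := fun i l => (x' i : R) + ↑(x' i)⁻¹ - x' l - ↑(x' l)⁻¹
  have hf : ∀ i j : Fin n, (x i : R) + ↑(x i)⁻¹ - x j - ↑(x j)⁻¹ = f i j := fun i j => by
    simp only [f, hx' _ i.isLt, hx' _ j.isLt]
  simp only [hf]
  rw [← det_prod_Ico_eq_prod_Ioi f fun i _ => by simp [f], ← Matrix.det_diagonal,
    ← Matrix.det_mul, ← Matrix.det_mul, Matrix.mul_assoc]
  congr 1
  ext i j
  rw [Matrix.diagonal_mul, Matrix.mul_apply, Matrix.of_apply, ← hx' i i.isLt,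
    entry_eq_sum_hoo x' a i.isLt, ← Fin.sum_univ_eq_sum_range]
  congr 1
  refine sum_congr rfl fun k _ => ?_
  have hsub : (fun t : Fin (n - k) => x' (k + t)) = fun t : Fin (n - k) => x ⟨k + t, by omega⟩ :=
    funext fun t => hx' _ _
  rw [hsub, show ((lam j + (n - 1 - j) : ℕ) : ℤ) - (n - 1 - k : ℕ) = lam j - j + k by omega]
  rfl
end

section
/- Let R be a commutative ring, let n ≥ 1, let x_1, …, x_n ∈ R, let a = (a_1, a_2, …) be a sequence in R, and let m ≥ 1 be an integer. Then h^{gl}_m((x_1,…,x_n)|a) = Σ (x_{i_1} + a_{i_1}) · (x_{i_2} + a_{i_2+1}) ⋯ (x_{i_m} + a_{i_m+m−1}), where the sum runs over all weakly increasing sequences 1 ≤ i_1 ≤ i_2 ≤ ⋯ ≤ i_m ≤ n. -/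
/-!
Writing `geom x_n = 1 + x_n t · geom x_n` in the generating function gives the recursion
`h_{m+1}(x_1,…,x_n) = h_{m+1}(x_1,…,x_{n-1}) + (x_n + a_{n+m}) h_m(x_1,…,x_n)`;
the extra factor `1 + a_{n+m} t` appears because the product over `a` has `n + m - 1` factors.
The sum over weakly increasing sequences satisfies the same recursion, splitting on whether
`i_{m+1} = n`.
-/

open Finset

theorem Monotone.fin_snoc {α : Type*} [Preorder α] {m : ℕ} {g : Fin m → α} {a : α}
    (hg : Monotone g) (ha : ∀ i, g i ≤ a) : Monotone (Fin.snoc g a : Fin (m + 1) → α) := by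
  intro k l hkl
  induction l using Fin.lastCases with
  | last =>
    induction k using Fin.lastCases with
    | last => simp
    | cast k => simpa using ha k
  | cast l =>
    obtain ⟨k, rfl⟩ := Fin.exists_castSucc_eq.2
      (Fin.ne_last_of_lt (lt_of_le_of_lt hkl (Fin.castSucc_lt_last l)))
    simpa using hg (Fin.castSucc_le_castSucc_iff.1 hkl)

def monotoneMaps (m n : ℕ) : Finset (Fin m → Fin n) :=
  univ.filter fun f => ∀ k l : Fin m, k ≤ l → f k ≤ f l

section MonotoneMaps

variable {m n : ℕ}

theorem mem_monotoneMaps {f : Fin m → Fin n} : f ∈ monotoneMaps m n ↔ Monotone f := by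
  simp [monotoneMaps, Monotone]

theorem monotoneMaps_filter_last_ne :
    (monotoneMaps (m + 1) (n + 1)).filter (fun f => f (Fin.last m) ≠ Fin.last n) =
      (monotoneMaps (m + 1) n).map Fin.castSuccEmb.arrowCongrRight := by
  ext f
  simp only [mem_filter, mem_map, mem_monotoneMaps, Function.Embedding.arrowCongrRight_apply]
  constructor
  · rintro ⟨hf, hlast⟩
    have hne : ∀ l, f l ≠ Fin.last n := fun l =>
      Fin.ne_last_of_lt (lt_of_le_of_lt (hf (Fin.le_last l)) (Fin.lt_last_iff_ne_last.2 hlast))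
    exact ⟨fun l => (f l).castPred (hne l), Fin.monotone_castPred_comp hne hf,
      funext fun l => Fin.castSucc_castPred _ _⟩
  · rintro ⟨g, hg, rfl⟩
    exact ⟨Fin.strictMono_castSucc.monotone.comp hg, (Fin.castSucc_lt_last _).ne⟩

theorem monotoneMaps_filter_last_eq :
    (monotoneMaps (m + 1) (n + 1)).filter (fun f => f (Fin.last m) = Fin.last n) =
      (monotoneMaps m (n + 1)).map
        ⟨(Fin.snoc · (Fin.last n)), Fin.snoc_left_injective (α := fun _ => Fin (n + 1)) _⟩ :=
    by
  ext f
  simp only [mem_filter, mem_map, mem_monotoneMaps, Function.Embedding.coeFn_mk]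
  constructor
  · rintro ⟨hf, hlast⟩
    exact ⟨Fin.init f, hf.comp Fin.strictMono_castSucc.monotone,
      by rw [← hlast, Fin.snoc_init_self]⟩
  · rintro ⟨g, hg, rfl⟩
    exact ⟨hg.fin_snoc fun _ => Fin.le_last _, Fin.snoc_last _ _⟩

theorem sum_monotoneMaps_succ_succ {R : Type*} [CommRing R] (w : ℕ → Fin (n + 1) → R) :
    ∑ f ∈ monotoneMaps (m + 1) (n + 1), ∏ l : Fin (m + 1), w l (f l) =
      ∑ g ∈ monotoneMaps (m + 1) n, ∏ l : Fin (m + 1), w l (g l).castSucc +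
        w m (Fin.last n) * ∑ g ∈ monotoneMaps m (n + 1), ∏ l : Fin m, w l (g l) := by
  rw [← sum_filter_not_add_sum_filter _ (fun f => f (Fin.last m) = Fin.last n),
    monotoneMaps_filter_last_ne, monotoneMaps_filter_last_eq, sum_map, sum_map, mul_sum]
  congr 1
  refine sum_congr rfl fun g _ => ?_
  simp [Fin.prod_univ_castSucc, mul_comm]

end MonotoneMaps

open PowerSeries

section PowerSeries

variable {R : Type*} [CommRing R]

theorem geom_eq_one_add (y : R) : geom y = 1 + C y * X * geom y := by
  ext (_ | k)
  · simp [geom]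
  · rw [map_add, mul_comm (C y), mul_assoc, coeff_succ_X_mul, coeff_C_mul]
    simp [geom, pow_succ', coeff_one]

theorem coeff_succ_mul_lin (P : PowerSeries R) (b : R) (k : ℕ) :
    coeff (k + 1) (P * lin b) = coeff (k + 1) P + b * coeff k P := by
  rw [lin, mul_add, mul_one, map_add, mul_left_comm, coeff_C_mul, coeff_succ_mul_X]

theorem coeff_prod_lin_eq_zero {ι : Type*} (b : ι → R) (s : Finset ι) {k : ℕ}
    (hk : s.card < k) : coeff k (∏ j ∈ s, lin (b j)) = 0 := by
  classical
  induction s using Finset.induction_on generalizing k with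
  | empty => simp [coeff_one, (Nat.zero_lt_of_lt hk).ne']
  | insert j s hj ih =>
    rw [card_insert_of_notMem hj] at hk
    obtain ⟨k, rfl⟩ : ∃ k', k = k' + 1 := ⟨k - 1, by omega⟩
    rw [prod_insert hj, mul_comm, coeff_succ_mul_lin, ih (by omega), ih (by omega), mul_zero,
      add_zero]

end PowerSeries

section Hgl

variable {R : Type*} [CommRing R] {n : ℕ}

theorem hgl_natCast (x : Fin n → R) (a : ℕ → R) (m : ℕ) :
    hgl x a m = coeff m ((∏ i, geom (x i)) * ∏ j ∈ range (n + m - 1), lin (a (j + 1))) := by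
  simp [hgl]

theorem hgl_zero (x : Fin n → R) (a : ℕ → R) : hgl x a 0 = 1 := by
  simp [hgl, coeff_zero_eq_constantCoeff_apply, geom, lin]

theorem hgl_fin_zero_succ (x : Fin 0 → R) (a : ℕ → R) (m : ℕ) : hgl x a ↑(m + 1) = 0 := by
  rw [hgl_natCast, univ_eq_empty, prod_empty, one_mul]
  exact coeff_prod_lin_eq_zero _ _ (by simp)

theorem hgl_succ_succ (x : Fin (n + 1) → R) (a : ℕ → R) (m : ℕ) :
    hgl x a ↑(m + 1) =
      hgl (Fin.init x) a ↑(m + 1) + (x (Fin.last n) + a (n + m + 1)) * hgl x a m := by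
  set G := ∏ i, geom (x i)
  set G' := ∏ i, geom (Fin.init x i)
  set L := ∏ j ∈ range (n + m), lin (a (j + 1))
  have hsplit : G = G' * geom (x (Fin.last n)) := Fin.prod_univ_castSucc _
  have hG : G = G' + C (x (Fin.last n)) * X * G := by
    conv_lhs => rw [hsplit, geom_eq_one_add]
    rw [hsplit]
    ring
  have hcoeff :
      coeff (m + 1) (G * L) = coeff (m + 1) (G' * L) + x (Fin.last n) * coeff m (G * L) := by
    conv_lhs => rw [hG]
    rw [add_mul, map_add, show C (x (Fin.last n)) * X * G * L = C (x (Fin.last n)) * (G * L * X) by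
      ring, coeff_C_mul, coeff_succ_mul_X]
  rw [hgl_natCast, hgl_natCast, hgl_natCast, show n + 1 + (m + 1) - 1 = n + m + 1 by omega,
    show n + (m + 1) - 1 = n + m by omega, show n + 1 + m - 1 = n + m by omega, prod_range_succ,
    ← mul_assoc, coeff_succ_mul_lin, hcoeff]
  ring

end Hgl

theorem hgl_monomial_expansion_general {R : Type*} [CommRing R] (n : ℕ)
    (x : Fin n → R) (a : ℕ → R) (m : ℕ) :
    hgl x a (m : ℤ) =
      ∑ f ∈ Finset.univ.filter (fun f : Fin m → Fin n => ∀ k l : Fin m, k ≤ l → f k ≤ f l),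
        ∏ l : Fin m, (x (f l) + a ((f l : ℕ) + (l : ℕ) + 1)) := by
  change hgl x a m = ∑ f ∈ monotoneMaps m n, _
  induction m generalizing n with
  | zero => simp [hgl_zero, monotoneMaps, univ_unique]
  | succ m ihm =>
    induction n with
    | zero => rw [hgl_fin_zero_succ]; simp [monotoneMaps]
    | succ n ihn =>
      rw [hgl_succ_succ, ihn, ihm, sum_monotoneMaps_succ_succ (fun l i => x i + a (i + l + 1))]
      simp [Fin.init]

/-- monomial expansion of `h^gl`. -/
theorem hgl_monomial_expansion {R : Type*} [CommRing R] (n : ℕ) (hn : 1 ≤ n)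
    (x : Fin n → R) (a : ℕ → R) (m : ℕ) (hm : 1 ≤ m) :
    hgl x a (m : ℤ) =
      ∑ f ∈ Finset.univ.filter (fun f : Fin m → Fin n => ∀ k l : Fin m, k ≤ l → f k ≤ f l),
        ∏ l : Fin m, (x (f l) + a ((f l : ℕ) + (l : ℕ) + 1)) :=
  hgl_monomial_expansion_general n x a m
end
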